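/- Let E be a real Banach space, B : E → E a compact linear operator, and suppose μ* ∈ ℝ is a bifurcation point of the equation φ = μ·B φ + D(φ, μ), where D is continuous with ‖D(φ,μ)‖/‖φ‖ → 0 as ‖φ‖ → 0 uniformly for μ near μ*. Then μ* is a characteristic value of B, i.e. there exists φ ≠ 0 with φ = μ*·B φ. -/

import Mathlib

/-!
Normalize the bifurcating solutions: `ψₖ = φₖ / ‖φₖ‖` are unit vectors with
`ψₖ - μₖ • B ψₖ = D(φₖ, μₖ) / ‖φₖ‖ → 0`. Compactness of `B` gives a subsequence along which
`B ψₖ → z`, hence `ψₖ → μ* • z`; passing to the limit, `μ* • z` is a unit vector solving the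
linearized equation.
-/

open Filter Topology

theorem IsCompactOperator.exists_strictMono_tendsto_apply
    {𝕜 E F : Type*} [NontriviallyNormedField 𝕜] [SeminormedAddCommGroup E] [NormedSpace 𝕜 E]
    [NormedAddCommGroup F] [NormedSpace 𝕜 F] {B : E →L[𝕜] F} (hB : IsCompactOperator B)
    {x : ℕ → E} (hx : Bornology.IsBounded (Set.range x)) :
    ∃ z : F, ∃ g : ℕ → ℕ, StrictMono g ∧ Tendsto (fun n => B (x (g n))) atTop (𝓝 z) := by
  obtain ⟨K, hK, hBK⟩ := hB.image_subset_compact_of_bounded hx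
  obtain ⟨z, -, g, hg, hgz⟩ := hK.tendsto_subseq fun k => hBK ⟨x k, ⟨k, rfl⟩, rfl⟩
  exact ⟨z, g, hg, hgz⟩

theorem IsCompactOperator.exists_ne_zero_eq_smul_apply_of_tendsto
    {𝕜 E : Type*} [NontriviallyNormedField 𝕜] [NormedAddCommGroup E] [NormedSpace 𝕜 E]
    {B : E →L[𝕜] E} (hB : IsCompactOperator B) {μ : ℕ → 𝕜} {μ₀ : 𝕜} {ψ : ℕ → E}
    (hψ : ∀ k, ‖ψ k‖ = 1) (hμ : Tendsto μ atTop (𝓝 μ₀))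
    (hres : Tendsto (fun k => ψ k - μ k • B (ψ k)) atTop (𝓝 0)) :
    ∃ φ : E, φ ≠ 0 ∧ φ = μ₀ • B φ := by
  have hbdd : Bornology.IsBounded (Set.range ψ) :=
    isBounded_iff_forall_norm_le.2 ⟨1, by rintro _ ⟨k, rfl⟩; exact (hψ k).le⟩
  obtain ⟨z, g, hg, hBz⟩ := hB.exists_strictMono_tendsto_apply hbdd
  have hψlim : Tendsto (fun n => ψ (g n)) atTop (𝓝 (μ₀ • z)) := by
    have h := ((hμ.comp hg.tendsto_atTop).smul hBz).add (hres.comp hg.tendsto_atTop)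
    rw [add_zero] at h
    exact h.congr fun n => add_sub_cancel _ _
  have hz : z = B (μ₀ • z) :=
    tendsto_nhds_unique hBz ((B.continuous.tendsto _).comp hψlim)
  have hnorm : ‖μ₀ • z‖ = 1 :=
    tendsto_nhds_unique hψlim.norm (by simp only [hψ, tendsto_const_nhds])
  refine ⟨μ₀ • z, norm_ne_zero_iff.1 (hnorm ▸ one_ne_zero), ?_⟩
  conv_lhs => rw [hz]

theorem tendsto_inv_norm_smul_of_forall_norm_le_mul
    {E F : Type*} [SeminormedAddCommGroup E] [SeminormedAddCommGroup F] [NormedSpace ℝ F]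
    {D : E → ℝ → F} {μ₀ : ℝ}
    (hD : ∀ ε > 0, ∃ δ > 0, ∀ φ : E, ∀ μ : ℝ,
        ‖φ‖ < δ → |μ - μ₀| < δ → ‖D φ μ‖ ≤ ε * ‖φ‖)
    {μ : ℕ → ℝ} {φ : ℕ → E} (hμ : Tendsto μ atTop (𝓝 μ₀)) (hφ : Tendsto φ atTop (𝓝 0)) :
    Tendsto (fun k => ‖φ k‖⁻¹ • D (φ k) (μ k)) atTop (𝓝 0) := by
  rw [Metric.tendsto_atTop]
  intro ε hε
  obtain ⟨δ, hδ, hbound⟩ := hD (ε / 2) (half_pos hε)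
  obtain ⟨N₁, hN₁⟩ := Metric.tendsto_atTop.1 hφ δ hδ
  obtain ⟨N₂, hN₂⟩ := Metric.tendsto_atTop.1 hμ δ hδ
  refine ⟨max N₁ N₂, fun k hk => ?_⟩
  have hφk : ‖φ k‖ < δ := by simpa using hN₁ k (le_of_max_le_left hk)
  have hμk : |μ k - μ₀| < δ := hN₂ k (le_of_max_le_right hk)
  calc dist (‖φ k‖⁻¹ • D (φ k) (μ k)) 0 = ‖φ k‖⁻¹ * ‖D (φ k) (μ k)‖ := by
        rw [dist_zero_right, norm_smul, norm_inv, norm_norm]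
    _ ≤ ‖φ k‖⁻¹ * (ε / 2 * ‖φ k‖) := by gcongr; exact hbound _ _ hφk hμk
    _ ≤ ε / 2 := by
        rw [mul_left_comm]
        exact mul_le_of_le_one_right (half_pos hε).le (inv_mul_le_one_of_le₀ le_rfl (norm_nonneg _))
    _ < ε := half_lt_self hε

theorem bifurcation_point_is_characteristic_value_general
    {E : Type*} [NormedAddCommGroup E] [NormedSpace ℝ E]
    (B : E →L[ℝ] E) (hB : IsCompactOperator B)
    (D : E → ℝ → E)
    (μstar : ℝ)
    (hDo : ∀ ε > 0, ∃ δ > 0, ∀ φ : E, ∀ μ : ℝ,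
        ‖φ‖ < δ → |μ - μstar| < δ → ‖D φ μ‖ ≤ ε * ‖φ‖)
    (μseq : ℕ → ℝ) (φseq : ℕ → E)
    (hμ : Tendsto μseq atTop (𝓝 μstar))
    (hφ0 : Tendsto φseq atTop (𝓝 0))
    (hφne : ∀ k, φseq k ≠ 0)
    (heq : ∀ k, φseq k = μseq k • B (φseq k) + D (φseq k) (μseq k)) :
    ∃ φ : E, φ ≠ 0 ∧ φ = μstar • B φ := by
  refine hB.exists_ne_zero_eq_smul_apply_of_tendsto (ψ := fun k => ‖φseq k‖⁻¹ • φseq k)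
    (fun k => norm_smul_inv_norm (hφne k)) hμ ?_
  refine (tendsto_inv_norm_smul_of_forall_norm_le_mul hDo hμ hφ0).congr fun k => ?_
  have hD : D (φseq k) (μseq k) = φseq k - μseq k • B (φseq k) := by
    rw [eq_sub_iff_add_eq', ← heq k]
  rw [hD, map_smul, smul_comm, smul_sub]

/-- Necessity half of Krasnoselskii's linearization theorem: a bifurcation point of
`φ = μ·Bφ + D(φ,μ)` with `B` compact linear and `D` of higher order at `0`
(uniformly for `μ` near `μ*`) is a characteristic value of `B`. -/
theorem bifurcation_point_is_characteristic_value
    {E : Type*} [NormedAddCommGroup E] [NormedSpace ℝ E] [CompleteSpace E]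
    (B : E →L[ℝ] E) (hB : IsCompactOperator B)
    (D : E → ℝ → E) (hDcont : Continuous fun p : E × ℝ => D p.1 p.2)
    (μstar : ℝ)
    (hDo : ∀ ε > 0, ∃ δ > 0, ∀ φ : E, ∀ μ : ℝ,
        ‖φ‖ < δ → |μ - μstar| < δ → ‖D φ μ‖ ≤ ε * ‖φ‖)
    (μseq : ℕ → ℝ) (φseq : ℕ → E)
    (hμ : Tendsto μseq atTop (𝓝 μstar))
    (hφ0 : Tendsto φseq atTop (𝓝 0))
    (hφne : ∀ k, φseq k ≠ 0)
    (heq : ∀ k, φseq k = μseq k • B (φseq k) + D (φseq k) (μseq k)) :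
    ∃ φ : E, φ ≠ 0 ∧ φ = μstar • B φ :=
  bifurcation_point_is_characteristic_value_general B hB D μstar hDo μseq φseq hμ hφ0 hφne heq
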